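/- Let λ be a regular cardinal with λ > 𝔥, where 𝔥 = 𝔥(ℙ_ω) and ℙ_ω is the forcing of infinite subsets of ω ordered by almost-inclusion ⊆*. If ⟨A_ξ : ξ < λ⟩ is a base matrix for ℙ_ω of height λ, then for every element a ∈ ⋃_{ξ<λ} A_ξ there is a maximal branch of the matrix containing a which is not cofinal. -/

import Mathlib

universe u

section ForcingDefs

variable {P : Type u} [Preorder P]

/-- Two conditions of a forcing notion are compatible if they have a common lower bound. -/
def Compat (p q : P) : Prop := ∃ r : P, r ≤ p ∧ r ≤ q

/-- A maximal antichain: a set of pairwise incompatible conditions such that every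
condition is compatible with some element of the set. -/
def MaxAntichain (A : Set P) : Prop :=
  (∀ p ∈ A, ∀ q ∈ A, p ≠ q → ¬ Compat p q) ∧ ∀ p : P, ∃ a ∈ A, Compat p a

/-- `B` refines `A` if every element of `B` lies below some element of `A`. -/
def Refines (B A : Set P) : Prop := ∀ b ∈ B, ∃ a ∈ A, b ≤ a

/-- `P` is `κ`-distributive: every family of `κ` many maximal antichains has a
common refinement. -/
def Distributive (P : Type u) [Preorder P] (κ : Cardinal.{u}) : Prop :=
  ∀ (ι : Type u) (A : ι → Set P), Cardinal.mk ι = κ →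
    (∀ i, MaxAntichain (A i)) →
    ∃ B : Set P, MaxAntichain B ∧ ∀ i, Refines B (A i)

/-- The distributivity number `𝔥(P)`: the least cardinal `κ` such that `P` is not
`κ`-distributive. -/
noncomputable def hdist (P : Type u) [Preorder P] : Cardinal.{u} :=
  sInf {κ : Cardinal.{u} | ¬ Distributive P κ}

/-- A distributivity matrix for `P` of height `lam` (an ordinal, typically `λ.ord`
for a cardinal `λ`): a refining sequence of maximal antichains without common
refinement. -/
def IsDistribMatrix (P : Type u) [Preorder P] (lam : Ordinal.{u})
    (A : Ordinal.{u} → Set P) : Prop :=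
  (∀ ξ, ξ < lam → MaxAntichain (A ξ)) ∧
  (∀ ξ η : Ordinal.{u}, ξ ≤ η → η < lam → Refines (A η) (A ξ)) ∧
  ¬ ∃ B : Set P, MaxAntichain B ∧ ∀ ξ, ξ < lam → Refines B (A ξ)

/-- A base matrix: a distributivity matrix whose union is dense. -/
def IsBaseMatrix (P : Type u) [Preorder P] (lam : Ordinal.{u})
    (A : Ordinal.{u} → Set P) : Prop :=
  IsDistribMatrix P lam A ∧ ∀ p : P, ∃ ξ, ξ < lam ∧ ∃ a ∈ A ξ, a ≤ p

/-- A branch of the matrix `A` of length `δ`: a decreasing sequence meeting each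
level below `δ`. -/
def IsBranch {P : Type u} [Preorder P] (A : Ordinal.{u} → Set P) (δ : Ordinal.{u})
    (f : Ordinal.{u} → P) : Prop :=
  (∀ ξ, ξ < δ → f ξ ∈ A ξ) ∧
  ∀ ξ η : Ordinal.{u}, ξ ≤ η → η < δ → f η ≤ f ξ

/-- A maximal branch of a matrix of height `lam`: a branch which no branch of the
matrix strictly extends. -/
def IsMaximalBranch {P : Type u} [Preorder P] (A : Ordinal.{u} → Set P)
    (lam δ : Ordinal.{u}) (f : Ordinal.{u} → P) : Prop :=
  δ ≤ lam ∧ IsBranch A δ f ∧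
  ¬ ∃ (δ' : Ordinal.{u}) (g : Ordinal.{u} → P),
      δ < δ' ∧ δ' ≤ lam ∧ IsBranch A δ' g ∧ ∀ ξ, ξ < δ → g ξ = f ξ

end ForcingDefs

/-- The forcing `ℙ_ω`: infinite subsets of `ω` ordered by almost-inclusion `⊆*`. -/
def Pinf : Type := {a : Set ℕ // a.Infinite}

/-- `b ≤ a` iff `b ⊆* a`, i.e. `b \ a` is finite. -/
instance : Preorder Pinf where
  le b a := (b.1 \ a.1).Finite
  le_refl a := by simp
  le_trans a b c hab hbc := by
    refine Set.Finite.subset (hab.union hbc) ?_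
    intro x hx
    by_cases hxb : x ∈ b.1
    · exact Or.inr ⟨hxb, hx.2⟩
    · exact Or.inl ⟨hx.1, hxb⟩

instance : Nonempty Pinf := ⟨⟨Set.univ, Set.infinite_univ⟩⟩

/-!
Suppose, towards a contradiction, that every branch through `a` of length `< λ` extends to the
next level. Every condition of `ℙ_ω` has two incompatible extensions and the matrix is dense, so a
condition lies below nodes only on an initial segment of levels of length `< λ`. Hence fewer than
`λ` pairwise compatible nodes, one of them `a`, determine a branch through `a` of length `< λ`
(by regularity of `λ`), and extending that branch gives a node below all of them. A transfinite
recursion of length `𝔥 < λ` then meets any `𝔥` dense open sets below `a`, so `ℙ_ω` would be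
`𝔥`-distributive below `a`. Since any two cones of `ℙ_ω` are isomorphic (through a bijection
between two infinite subsets of `ω`), this contradicts the failure of `𝔥`-distributivity.
-/

section Forcing

variable {P : Type u} [Preorder P]

theorem compat_of_le {p q : P} (h : p ≤ q) : Compat p q := ⟨p, le_rfl, h⟩

theorem Compat.symm {p q : P} : Compat p q → Compat q p
  | ⟨r, hp, hq⟩ => ⟨r, hq, hp⟩

theorem MaxAntichain.eq_of_compat {A : Set P} (hA : MaxAntichain A) {p q : P} (hp : p ∈ A)
    (hq : q ∈ A) (h : Compat p q) : p = q :=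
  by_contra fun hne => hA.1 p hp q hq hne h

theorem exists_maxAntichain_subset (X : Set P) (hX : ∀ p : P, ∃ q ≤ p, q ∈ X) :
    ∃ C ⊆ X, MaxAntichain C := by
  obtain ⟨C, hC⟩ := zorn_subset {C | C ⊆ X ∧ C.Pairwise fun p q => ¬ Compat p q} fun c hc hchain =>
    ⟨⋃₀ c, ⟨Set.sUnion_subset fun s hs => (hc hs).1,
      hchain.pairwise_sUnion.2 fun s hs => (hc hs).2⟩, fun _ => Set.subset_sUnion_of_mem⟩
  refine ⟨C, hC.prop.1, hC.prop.2, fun p => by_contra fun hp => ?_⟩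
  push Not at hp
  obtain ⟨q, hqp, hqX⟩ := hX p
  have hq : ∀ c ∈ C, ¬ Compat q c := fun c hc ⟨r, hrq, hrc⟩ => hp c hc ⟨r, hrq.trans hqp, hrc⟩
  have hqC : insert q C ⊆ C := hC.le_of_ge ⟨Set.insert_subset hqX hC.prop.1,
    hC.prop.2.insert fun c hc _ => ⟨hq c hc, fun h => hq c hc h.symm⟩⟩ (Set.subset_insert q C)
  exact hq q (hqC (Set.mem_insert q C)) (compat_of_le le_rfl)

def IsSplitting (P : Type u) [Preorder P] : Prop :=
  ∀ p : P, ∃ q ≤ p, ∃ r ≤ p, ¬ Compat q r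

theorem not_distributive_of_isSplitting (hP : IsSplitting P) [Nonempty P] :
    ¬ Distributive P (Cardinal.mk {C : Set P // MaxAntichain C}) := by
  intro hdistrib
  obtain ⟨B, hB, hBref⟩ := hdistrib _ (fun C => C.1) rfl fun C => C.2
  obtain ⟨b, hb, -⟩ := hB.2 (Classical.arbitrary P)
  obtain ⟨b₀, hb₀, b₁, hb₁, h₀₁⟩ := hP b
  -- every element of `C` is below `b₀` or incompatible with it, so none lies above `b`
  obtain ⟨C, hCX, hC⟩ := exists_maxAntichain_subset {q | q ≤ b₀ ∨ ¬ Compat q b₀} fun p => by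
    by_cases h : Compat p b₀
    · obtain ⟨r, hrp, hrb₀⟩ := h
      exact ⟨r, hrp, Or.inl hrb₀⟩
    · exact ⟨p, le_rfl, Or.inr h⟩
  obtain ⟨c, hc, hbc⟩ := hBref ⟨C, hC⟩ b hb
  rcases hCX hc with hcb₀ | hcb₀
  · exact h₀₁ (compat_of_le (hb₁.trans (hbc.trans hcb₀))).symm
  · exact hcb₀ (compat_of_le (hb₀.trans hbc)).symm

theorem hdist_not_distributive (hP : IsSplitting P) [Nonempty P] : ¬ Distributive P (hdist P) :=
  csInf_mem (s := {κ | ¬ Distributive P κ}) ⟨_, not_distributive_of_isSplitting hP⟩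

def DenseBelow (p : P) (D : Set P) : Prop :=
  ∀ r ≤ p, ∃ q ≤ r, q ∈ D

theorem exists_lowerSet_family_of_not_distributive {κ : Cardinal.{u}}
    (h : ¬ Distributive P κ) :
    ∃ (ι : Type u) (D : ι → LowerSet P), Cardinal.mk ι = κ ∧
      ∃ p₀, (∀ i, DenseBelow p₀ (D i)) ∧ ∀ q ≤ p₀, ∃ i, q ∉ D i := by
  unfold Distributive at h
  push Not at h
  obtain ⟨ι, B, hι, hB, hBref⟩ := h
  have hdense : ∀ i p, DenseBelow p (lowerClosure (B i) : Set P) := by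
    intro i _ r _
    obtain ⟨b, hb, q, hqr, hqb⟩ := (hB i).2 r
    exact ⟨q, hqr, b, hb, hqb⟩
  refine ⟨ι, fun i => lowerClosure (B i), hι, ?_⟩
  by_contra! hbad
  obtain ⟨C, hCX, hC⟩ := exists_maxAntichain_subset {q | ∀ i, q ∈ lowerClosure (B i)}
    fun p => hbad p fun i => hdense i p
  obtain ⟨i, hi⟩ := hBref C hC
  exact hi fun c hc => hCX hc i

theorem exists_lowerSet_family_below_of_coneMap {a b : P} (φ : Set.Iic a → P) (hφ : Monotone φ)
    (hφb : ∀ q, φ q ≤ b) (hφdense : ∀ r q', q' ≤ φ r → ∃ q ≤ r, φ q ≤ q') {ι : Type*}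
    (D : ι → LowerSet P) (hD : ∀ i, DenseBelow b (D i)) (hbad : ∀ q ≤ b, ∃ i, q ∉ D i) :
    ∃ D' : ι → LowerSet P, (∀ i, DenseBelow a (D' i)) ∧ ∀ q ≤ a, ∃ i, q ∉ D' i := by
  refine ⟨fun i => lowerClosure (Subtype.val '' (φ ⁻¹' D i)), fun i r hra => ?_, fun q hqa => ?_⟩
  · obtain ⟨q', hq'r, hq'D⟩ := hD i (φ ⟨r, hra⟩) (hφb _)
    obtain ⟨q, hqr, hφq⟩ := hφdense ⟨r, hra⟩ q' hq'r
    exact ⟨q, hqr, q, ⟨q, (D i).lower hφq hq'D, rfl⟩, le_rfl⟩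
  · obtain ⟨i, hi⟩ := hbad (φ ⟨q, hqa⟩) (hφb _)
    exact ⟨i, fun ⟨_, ⟨r, hr, rfl⟩, hqr⟩ => hi ((D i).lower (hφ hqr) hr)⟩

def ShortBranchesExtend (A : Ordinal.{u} → Set P) (lam : Ordinal.{u}) (a : P) : Prop :=
  ∀ s f, s < lam → IsBranch A s f → (∃ ξ < s, f ξ = a) → ∃ c ∈ A s, ∀ ξ < s, c ≤ f ξ

theorem shortBranchesExtend_of_not_exists_isMaximalBranch {A : Ordinal.{u} → Set P}
    {lam : Ordinal.{u}} {a : P}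
    (h : ¬ ∃ δ f, δ < lam ∧ IsMaximalBranch A lam δ f ∧ ∃ ξ < δ, f ξ = a) :
    ShortBranchesExtend A lam a := by
  intro s f hs hf hfa
  by_contra! hc
  refine h ⟨s, f, hs, ⟨hs.le, hf, ?_⟩, hfa⟩
  rintro ⟨s', g, hss', -, hg, hgf⟩
  obtain ⟨ξ, hξ, hgξ⟩ := hc (g s) (hg.1 s hss')
  exact hgξ (hgf ξ hξ ▸ hg.2 ξ s hξ.le hss')

end Forcing

section Matrix

variable {P : Type u} [Preorder P] {lam : Ordinal.{u}} {κ : Cardinal.{u}} {A : Ordinal.{u} → Set P}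

theorem not_le_of_level_le
    (href : ∀ ξ η : Ordinal.{u}, ξ ≤ η → η < lam → Refines (A η) (A ξ)) {p : P} {ξ η : Ordinal.{u}}
    (hξ : ∀ x ∈ A ξ, ¬ p ≤ x) (hξη : ξ ≤ η) (hη : η < lam) : ∀ x ∈ A η, ¬ p ≤ x := by
  intro x hx hpx
  obtain ⟨y, hy, hxy⟩ := href ξ η hξη hη x hx
  exact hξ y hy (hpx.trans hxy)

theorem exists_level_not_le (hP : IsSplitting P)
    (hanti : ∀ ξ < lam, ∀ x ∈ A ξ, ∀ y ∈ A ξ, Compat x y → x = y)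
    (hdense : ∀ p : P, ∃ ξ < lam, ∃ x ∈ A ξ, x ≤ p) (p : P) :
    ∃ ξ < lam, ∀ x ∈ A ξ, ¬ p ≤ x := by
  by_contra! hp
  obtain ⟨q, hqp, r, hrp, hqr⟩ := hP p
  obtain ⟨ζ, hζ, d, hd, hdq⟩ := hdense q
  obtain ⟨x, hx, hpx⟩ := hp ζ hζ
  -- the node `x` above `p` must be `d`, which lies below `q`; then `r ≤ q`
  have hdx : d = x := hanti ζ hζ d hd x hx (compat_of_le (hdq.trans (hqp.trans hpx)))
  exact hqr (compat_of_le (hrp.trans (hpx.trans (hdx ▸ hdq)))).symm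

theorem exists_level_not_le_of_mk_lt (hκ : κ.IsRegular) (hP : IsSplitting P)
    (hanti : ∀ ξ < κ.ord, ∀ x ∈ A ξ, ∀ y ∈ A ξ, Compat x y → x = y)
    (href : ∀ ξ η : Ordinal.{u}, ξ ≤ η → η < κ.ord → Refines (A η) (A ξ))
    (hdense : ∀ p : P, ∃ ξ < κ.ord, ∃ x ∈ A ξ, x ≤ p) {S : Set P} (hS : Cardinal.mk S < κ) :
    ∃ σ < κ.ord, ∀ x ∈ A σ, ∀ p ∈ S, ¬ p ≤ x := by
  choose ξ hξ using fun p : S => exists_level_not_le hP hanti hdense p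
  have hσ : ⨆ p, ξ p < κ.ord :=
    Ordinal.iSup_lt_of_lt_cof (by rwa [hκ.cof_ord]) fun p => (hξ p).1
  exact ⟨_, hσ, fun x hx p hp =>
    not_le_of_level_le href (hξ ⟨p, hp⟩).2 (Ordinal.le_iSup ξ ⟨p, hp⟩) hσ x hx⟩

theorem exists_branch_through_of_compat [Nonempty P]
    (hanti : ∀ ξ < lam, ∀ x ∈ A ξ, ∀ y ∈ A ξ, Compat x y → x = y)
    (href : ∀ ξ η : Ordinal.{u}, ξ ≤ η → η < lam → Refines (A η) (A ξ))
    {S : Set P} (hS : ∀ p ∈ S, ∀ q ∈ S, Compat p q) {σ : Ordinal.{u}} (hσ : σ < lam)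
    (hσS : ∀ x ∈ A σ, ∀ p ∈ S, ¬ p ≤ x) :
    ∃ s f, s < lam ∧ IsBranch A s f ∧ ∀ p ∈ S, ∀ ζ < lam, p ∈ A ζ → ζ < s ∧ f ζ = p := by
  -- the branch runs through the nodes above members of `S`, up to the first level with none
  set T := {ξ | ∀ x ∈ A ξ, ∀ p ∈ S, ¬ p ≤ x}
  have hT : T.Nonempty := ⟨σ, hσS⟩
  have hsT : ∀ x ∈ A (sInf T), ∀ p ∈ S, ¬ p ≤ x := csInf_mem hT
  have hs : sInf T < lam := (csInf_le' (show σ ∈ T from hσS)).trans_lt hσ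
  have hfex : ∀ ξ < sInf T, ∃ x ∈ A ξ, ∃ p ∈ S, p ≤ x := fun ξ hξ => by
    simpa [T] using notMem_of_lt_csInf' hξ
  choose! f hfA p hpS hpf using hfex
  have huniq : ∀ ξ < lam, ∀ x ∈ A ξ, ∀ y ∈ A ξ, ∀ q ∈ S, ∀ q' ∈ S, q ≤ x → q' ≤ y → x = y :=
    fun ξ hξ x hx y hy q hq q' hq' hqx hq'y =>
      (hS q hq q' hq').elim fun r hr => hanti ξ hξ x hx y hy ⟨r, hr.1.trans hqx, hr.2.trans hq'y⟩
  refine ⟨sInf T, f, hs, ⟨hfA, fun ξ η hξη hη => ?_⟩, fun q hq ζ hζ hqA => ?_⟩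
  · obtain ⟨y, hy, hfy⟩ := href ξ η hξη (hη.trans hs) (f η) (hfA η hη)
    have hξ := hξη.trans_lt hη
    rw [huniq ξ (hξ.trans hs) (f ξ) (hfA ξ hξ) y hy _ (hpS ξ hξ) _ (hpS η hη) (hpf ξ hξ)
      ((hpf η hη).trans hfy)]
    exact hfy
  · have hζs : ζ < sInf T :=
      lt_of_not_ge fun h => not_le_of_level_le href (fun x hx => hsT x hx q hq) h hζ q hqA le_rfl
    exact ⟨hζs, huniq ζ hζ _ (hfA ζ hζs) q hqA _ (hpS ζ hζs) q hq (hpf ζ hζs) le_rfl⟩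

theorem exists_node_le_of_compat (hκ : κ.IsRegular) (hP : IsSplitting P)
    (hanti : ∀ ξ < κ.ord, ∀ x ∈ A ξ, ∀ y ∈ A ξ, Compat x y → x = y)
    (href : ∀ ξ η : Ordinal.{u}, ξ ≤ η → η < κ.ord → Refines (A η) (A ξ))
    (hdense : ∀ p : P, ∃ ξ < κ.ord, ∃ x ∈ A ξ, x ≤ p) {a : P}
    (hext : ShortBranchesExtend A κ.ord a) {S : Set P} (haS : a ∈ S)
    (hS : ∀ p ∈ S, ∀ q ∈ S, Compat p q) (hSnode : ∀ p ∈ S, ∃ ζ < κ.ord, p ∈ A ζ)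
    (hSκ : Cardinal.mk S < κ) :
    ∃ ζ < κ.ord, ∃ c ∈ A ζ, ∀ p ∈ S, c ≤ p := by
  have : Nonempty P := ⟨a⟩
  obtain ⟨σ, hσ, hσS⟩ := exists_level_not_le_of_mk_lt hκ hP hanti href hdense hSκ
  obtain ⟨s, f, hs, hf, hfS⟩ := exists_branch_through_of_compat hanti href hS hσ hσS
  obtain ⟨ξ₀, hξ₀, haA⟩ := hSnode a haS
  obtain ⟨c, hc, hcf⟩ := hext s f hs hf ⟨ξ₀, hfS a haS ξ₀ hξ₀ haA⟩
  refine ⟨s, hs, c, hc, fun p hp => ?_⟩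
  obtain ⟨ζ, hζ, hpA⟩ := hSnode p hp
  obtain ⟨hζs, hfζ⟩ := hfS p hp ζ hζ hpA
  exact hfζ ▸ hcf ζ hζs

theorem exists_node_le_of_antitone (hκ : κ.IsRegular) (hP : IsSplitting P)
    (hanti : ∀ ξ < κ.ord, ∀ x ∈ A ξ, ∀ y ∈ A ξ, Compat x y → x = y)
    (href : ∀ ξ η : Ordinal.{u}, ξ ≤ η → η < κ.ord → Refines (A η) (A ξ))
    (hdense : ∀ p : P, ∃ ξ < κ.ord, ∃ x ∈ A ξ, x ≤ p) {a : P} (ha : ∃ ξ₀ < κ.ord, a ∈ A ξ₀)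
    (hext : ShortBranchesExtend A κ.ord a) {ι : Type u} [LinearOrder ι]
    (hι : Cardinal.mk ι < κ) (q : ι → P) (hq : Antitone q) (hqa : ∀ i, q i ≤ a)
    (hqnode : ∀ i, ∃ ζ < κ.ord, q i ∈ A ζ) :
    ∃ ζ < κ.ord, ∃ c ∈ A ζ, c ≤ a ∧ ∀ i, c ≤ q i := by
  have hS : ∀ p ∈ insert a (Set.range q), ∀ p' ∈ insert a (Set.range q), Compat p p' := by
    have hle : ∀ p ∈ insert a (Set.range q), p ≤ a := by
      rintro _ (rfl | ⟨i, rfl⟩)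
      exacts [le_rfl, hqa i]
    rintro p hp p' hp'
    rcases hp with rfl | ⟨i, rfl⟩
    · exact (compat_of_le (hle p' hp')).symm
    rcases hp' with rfl | ⟨j, rfl⟩
    · exact compat_of_le (hqa i)
    rcases le_total i j with hij | hji
    · exact (compat_of_le (hq hij)).symm
    · exact compat_of_le (hq hji)
  have hSκ : Cardinal.mk (insert a (Set.range q) : Set P) < κ :=
    Cardinal.mk_insert_le.trans_lt <| Cardinal.add_lt_of_lt hκ.aleph0_le
      (Cardinal.mk_range_le.trans_lt hι) (Cardinal.one_lt_aleph0.trans_le hκ.aleph0_le)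
  obtain ⟨ζ, hζ, c, hc, hcS⟩ := exists_node_le_of_compat hκ hP hanti href hdense hext
    (Set.mem_insert a _) hS (by rintro _ (rfl | ⟨i, rfl⟩); exacts [ha, hqnode i]) hSκ
  exact ⟨ζ, hζ, c, hc, hcS a (Set.mem_insert a _), fun i => hcS _ (Or.inr ⟨i, rfl⟩)⟩

theorem exists_le_forall_mem_of_shortBranchesExtend (hκ : κ.IsRegular) (hP : IsSplitting P)
    (hanti : ∀ ξ < κ.ord, ∀ x ∈ A ξ, ∀ y ∈ A ξ, Compat x y → x = y)
    (href : ∀ ξ η : Ordinal.{u}, ξ ≤ η → η < κ.ord → Refines (A η) (A ξ))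
    (hdense : ∀ p : P, ∃ ξ < κ.ord, ∃ x ∈ A ξ, x ≤ p) {a : P} (ha : ∃ ξ₀ < κ.ord, a ∈ A ξ₀)
    (hext : ShortBranchesExtend A κ.ord a) {ι : Type u} (hι : Cardinal.mk ι < κ)
    (D : ι → LowerSet P) (hD : ∀ i, DenseBelow a (D i)) :
    ∃ c ≤ a, ∀ i, c ∈ D i := by
  classical
  obtain ⟨_, _⟩ := exists_wellFoundedLT ι
  let good (i : ι) (prev : ∀ j < i, P) (d : P) : Prop :=
    (∃ ζ < κ.ord, d ∈ A ζ) ∧ d ≤ a ∧ (∀ j (hj : j < i), d ≤ prev j hj) ∧ d ∈ D i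
  let q : ι → P := wellFounded_lt.fix fun i prev => if h : ∃ d, good i prev d then h.choose else a
  have hq : ∀ i, good i (fun j _ => q j) (q i) := by
    intro i
    induction i using WellFoundedLT.induction with
    | _ i IH =>
      have hex : ∃ d, good i (fun j _ => q j) d := by
        obtain ⟨-, -, c, -, hca, hcq⟩ := exists_node_le_of_antitone hκ hP hanti href hdense ha hext
          ((Cardinal.mk_subtype_le _).trans_lt hι) (fun j : Set.Iio i => q j)
          (antitone_iff_forall_lt.2 fun j j' hjj' => (IH j' j'.2).2.2.1 j hjj')
          (fun j => (IH j j.2).2.1) fun j => (IH j j.2).1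
        obtain ⟨r, hrc, hrD⟩ := hD i c hca
        obtain ⟨ζ, hζ, d, hd, hdr⟩ := hdense r
        exact ⟨d, ⟨ζ, hζ, hd⟩, hdr.trans (hrc.trans hca),
          fun j hj => hdr.trans (hrc.trans (hcq ⟨j, hj⟩)), (D i).lower hdr hrD⟩
      rw [show q i = _ from wellFounded_lt.fix_eq _ i, dif_pos hex]
      exact hex.choose_spec
  obtain ⟨-, -, c, -, hca, hcq⟩ := exists_node_le_of_antitone hκ hP hanti href hdense ha hext hι q
    (antitone_iff_forall_lt.2 fun j j' hjj' => (hq j').2.2.1 j hjj') (fun i => (hq i).2.1)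
    fun i => (hq i).1
  exact ⟨c, hca, fun i => (D i).lower (hcq i) (hq i).2.2.2⟩

end Matrix

namespace Pinf

theorem le_of_subset {p q : Pinf} (h : p.1 ⊆ q.1) : p ≤ q := by
  show (p.1 \ q.1).Finite
  rw [Set.sdiff_eq_empty.2 h]
  exact Set.finite_empty

theorem infinite_inter_of_le {p q : Pinf} (h : p ≤ q) : (p.1 ∩ q.1).Infinite := fun hfin =>
  p.2 (Set.inter_union_sdiff p.1 q.1 ▸ hfin.union h)

theorem not_compat_of_finite_inter {p q : Pinf} (h : (p.1 ∩ q.1).Finite) : ¬ Compat p q := by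
  rintro ⟨r, hrp, hrq⟩
  refine infinite_inter_of_le hrp (((hrq : (r.1 \ q.1).Finite).union h).subset ?_)
  rintro x ⟨hxr, hxp⟩
  by_cases hxq : x ∈ q.1
  exacts [Or.inr ⟨hxp, hxq⟩, Or.inl ⟨hxr, hxq⟩]

theorem isSplitting : IsSplitting Pinf := by
  intro p
  obtain ⟨t, u, htu, hdisj, hcard⟩ := p.2.exists_union_disjoint_cardinal_eq_of_infinite
  have hfin : t.Finite ↔ u.Finite := by
    rw [← Cardinal.lt_aleph0_iff_set_finite, ← Cardinal.lt_aleph0_iff_set_finite, hcard]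
  have ht : t.Infinite := fun ht => p.2 (htu ▸ ht.union (hfin.1 ht))
  have hu : u.Infinite := fun hu => ht (hfin.2 hu)
  exact ⟨⟨t, ht⟩, le_of_subset (htu ▸ Set.subset_union_left), ⟨u, hu⟩,
    le_of_subset (htu ▸ Set.subset_union_right),
    not_compat_of_finite_inter (hdisj.inter_eq ▸ Set.finite_empty)⟩

theorem exists_coneMap (a b : Pinf) :
    ∃ φ : Set.Iic a → Pinf, Monotone φ ∧ (∀ q, φ q ≤ b) ∧
      ∀ r q', q' ≤ φ r → ∃ q ≤ r, φ q ≤ q' := by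
  have := a.2.to_subtype
  have := b.2.to_subtype
  obtain ⟨e⟩ : Nonempty (a.1 ≃ b.1) := nonempty_equiv_of_countable
  let f : a.1 → ℕ := fun z => e z
  have hf : Function.Injective f := Subtype.val_injective.comp e.injective
  let F : Set ℕ → Set ℕ := fun x => f '' (Subtype.val ⁻¹' x)
  have hFfin : ∀ x : Set ℕ, x.Finite → (F x).Finite := fun x hx =>
    (hx.preimage Subtype.val_injective.injOn).image f
  have hFinf : ∀ q : Set.Iic a, (F q.1.1).Infinite := fun q => by
    have hq := infinite_inter_of_le q.2
    rw [Set.inter_comm, ← Subtype.image_preimage_coe] at hq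
    exact (Set.Infinite.of_image _ hq).image hf.injOn
  refine ⟨fun q => ⟨F q.1.1, hFinf q⟩, fun q q' hqq' => ?_, fun q => le_of_subset ?_,
    fun r q' hq' => ?_⟩
  · show (F _ \ F _).Finite
    rw [← Set.image_sdiff hf, ← Set.preimage_sdiff]
    exact hFfin _ hqq'
  · rintro _ ⟨z, -, rfl⟩
    exact (e z).2
  · let y := q'.1 ∩ F r.1.1
    let x := Subtype.val '' (f ⁻¹' y)
    have hFx : F x = y := by
      simp only [F, x, Set.preimage_image_eq _ Subtype.val_injective]
      exact Set.image_preimage_eq_of_subset fun n hn => Set.image_subset_range _ _ hn.2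
    have hxr : x ⊆ r.1.1 := by
      rintro _ ⟨z, ⟨-, z', hz', hzz'⟩, rfl⟩
      exact hf hzz' ▸ hz'
    have hx : x.Infinite := fun h => infinite_inter_of_le hq' (show y.Finite from hFx ▸ hFfin x h)
    refine ⟨⟨⟨x, hx⟩, le_of_subset (Set.image_subset_range _ _ |>.trans
      Subtype.range_coe.subset)⟩, le_of_subset hxr, le_of_subset ?_⟩
    exact hFx.trans_subset Set.inter_subset_left

end Pinf

/-- For a base matrix for `ℙ_ω` of regular height `λ > 𝔥`, through
every element of the matrix there is a maximal branch which is not cofinal. -/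
theorem base_matrix_noncofinal_branch_through_every_node
    (lam : Cardinal.{0}) (hreg : lam.IsRegular) (hgt : hdist Pinf < lam)
    (A : Ordinal.{0} → Set Pinf) (hbase : IsBaseMatrix Pinf lam.ord A)
    (a : Pinf) (ha : ∃ ξ, ξ < lam.ord ∧ a ∈ A ξ) :
    ∃ (δ : Ordinal.{0}) (f : Ordinal.{0} → Pinf),
      δ < lam.ord ∧ IsMaximalBranch A lam.ord δ f ∧ ∃ ξ, ξ < δ ∧ f ξ = a := by
  obtain ⟨⟨hmax, href, -⟩, hdense⟩ := hbase
  have hanti : ∀ ξ < lam.ord, ∀ x ∈ A ξ, ∀ y ∈ A ξ, Compat x y → x = y :=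
    fun ξ hξ _ hx _ hy => (hmax ξ hξ).eq_of_compat hx hy
  by_contra hnone
  obtain ⟨ι, D, hι, p₀, hD, hp₀⟩ :=
    exists_lowerSet_family_of_not_distributive (hdist_not_distributive Pinf.isSplitting)
  obtain ⟨φ, hφ, hφp₀, hφdense⟩ := Pinf.exists_coneMap a p₀
  obtain ⟨D', hD', hbad⟩ := exists_lowerSet_family_below_of_coneMap φ hφ hφp₀ hφdense D hD hp₀
  obtain ⟨c, hca, hcD'⟩ := exists_le_forall_mem_of_shortBranchesExtend hreg Pinf.isSplitting
    hanti href hdense ha (shortBranchesExtend_of_not_exists_isMaximalBranch hnone) (hι ▸ hgt) D' hD'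
  obtain ⟨i, hi⟩ := hbad c hca
  exact hi (hcD' i)
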